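/- arXiv:2304.14561 — 7 statements merged into one kernel-verified Lean document; each statement's English description precedes it below -/
import Mathlib

section
/- Let (M,d) be a metric space, f : M → M a Lipschitz map, and k ≥ 1 a natural number. Then a point x satisfies d(0, f^n(x)) → ∞ as n → ∞ if and only if d(0, (f^k)^n(x)) → ∞ as n → ∞. That is, A_f = A_{f^k}. -/
/-!
Along multiples of `k` the two orbits coincide, so `A_f ⊆ A_{f^k}`. Conversely, every `m` lies
at most `k` steps before the next multiple of `k`, and the iterates `f^[j]`, `j ≤ k`, are
Lipschitz, hence `d(0, f^[j] y) ≤ C + L d(0, y)` uniformly in `j ≤ k`. Thus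
`d(0, f^[m] x)` is bounded below by an affine function of a term of the `f^k`-orbit.
-/

open Filter Topology NNReal

lemma LipschitzWith.dist_apply_le {α β : Type*} [PseudoMetricSpace α] [PseudoMetricSpace β]
    {K : ℝ≥0} {g : α → β} (hg : LipschitzWith K g) (a₀ : α) (b₀ : β) (y : α) :
    dist b₀ (g y) ≤ dist b₀ (g a₀) + K * dist a₀ y :=
  (dist_triangle _ _ _).trans (add_le_add_right (hg.dist_le_mul _ _) _)

lemma exists_uniform_affine_bound_of_lipschitzWith {ι α β : Type*} [PseudoMetricSpace α]
    [PseudoMetricSpace β] (s : Finset ι) {K : ι → ℝ≥0} {g : ι → α → β}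
    (hg : ∀ i ∈ s, LipschitzWith (K i) (g i)) (a₀ : α) (b₀ : β) :
    ∃ C L : ℝ, 0 < L ∧ ∀ i ∈ s, ∀ y, dist b₀ (g i y) ≤ C + L * dist a₀ y := by
  refine ⟨∑ i ∈ s, dist b₀ (g i a₀), 1 + ∑ i ∈ s, (K i : ℝ), by positivity, fun i hi y => ?_⟩
  have hC : dist b₀ (g i a₀) ≤ ∑ i ∈ s, dist b₀ (g i a₀) :=
    Finset.single_le_sum (f := fun i => dist b₀ (g i a₀)) (fun _ _ => dist_nonneg) hi
  have hL : (K i : ℝ) ≤ 1 + ∑ i ∈ s, (K i : ℝ) := by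
    have := Finset.single_le_sum (f := fun i => (K i : ℝ)) (fun _ _ => (K _).2) hi
    linarith
  calc dist b₀ (g i y) ≤ dist b₀ (g i a₀) + K i * dist a₀ y := (hg i hi).dist_apply_le a₀ b₀ y
    _ ≤ _ := by gcongr

lemma tendsto_atTop_of_tendsto_comp_mul {u : ℕ → ℝ} {k : ℕ} (hk : 0 < k) {C L : ℝ} (hL : 0 < L)
    (hgrowth : ∀ m j, j ≤ k → u (j + m) ≤ C + L * u m)
    (h : Tendsto (fun n => u (k * n)) atTop atTop) : Tendsto u atTop atTop := by
  have hnext : ∀ m, u (k * (m / k + 1)) ≤ C + L * u m := by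
    intro m
    have hlt := Nat.lt_mul_div_succ m hk
    have hle := Nat.mul_div_le m k
    have hj : k * (m / k + 1) - m + m = k * (m / k + 1) := Nat.sub_add_cancel hlt.le
    rw [← hj]
    exact hgrowth m _ (by rw [Nat.mul_succ]; omega)
  have hup : Tendsto (fun m => u (k * (m / k + 1))) atTop atTop :=
    h.comp (tendsto_atTop_mono (fun _ => Nat.le_succ _) (Nat.tendsto_div_const_atTop hk.ne'))
  have hmul : Tendsto (fun m => L * u m) atTop atTop :=
    (tendsto_atTop_add_const_left _ (-C) (tendsto_atTop_mono hnext hup)).congr fun m => by ring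
  exact (tendsto_const_mul_atTop_of_pos hL).1 hmul

theorem stmt_2 {M : Type*} [MetricSpace M] (x₀ : M)
    (f : M → M) (hf : ∃ K : NNReal, LipschitzWith K f)
    (k : ℕ) (hk : 1 ≤ k) (x : M) :
    Tendsto (fun n => dist x₀ (f^[n] x)) atTop atTop ↔
      Tendsto (fun n => dist x₀ ((f^[k])^[n] x)) atTop atTop := by
  simp only [← Function.iterate_mul]
  obtain ⟨K, hf⟩ := hf
  constructor
  · exact fun h => h.comp (tendsto_id.const_mul_atTop' hk)
  · obtain ⟨C, L, hL, hbound⟩ := exists_uniform_affine_bound_of_lipschitzWith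
      (Finset.range (k + 1)) (fun j _ => hf.iterate j) x₀ x₀
    refine tendsto_atTop_of_tendsto_comp_mul (u := fun n => dist x₀ (f^[n] x)) (C := C) hk hL
      fun m j hj => ?_
    rw [Function.iterate_add_apply]
    exact hbound j (Finset.mem_range_succ_iff.2 hj) _
end

section
/- Let α₁, …, α_q ∈ [0, 2π). Then there exists a strictly increasing sequence (n(k)) of natural numbers such that for every p ∈ {1, …, q}, the sequence (exp(i · n(k) · α_p))_k converges to 1. -/
/-!
The points `exp(i α_p)` form one element `x` of the compact group `(S¹)^q`. In a compact group
`1` is a cluster point of the powers `x^n` as `n → ∞` (Mathlib's `mapClusterPt_one_atTop_pow`),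
and in a first countable space a cluster point of a sequence is the limit of a subsequence.
-/

open Filter Topology Real

theorem exists_strictMono_tendsto_pow_one {G : Type*} [Group G] [TopologicalSpace G]
    [IsTopologicalGroup G] [CompactSpace G] [FirstCountableTopology G] (x : G) :
    ∃ n : ℕ → ℕ, StrictMono n ∧ Tendsto (fun k => x ^ n k) atTop (𝓝 1) :=
  (mapClusterPt_one_atTop_pow x).tendsto_subseq

theorem Circle.coe_exp_pow_apply {ι : Type*} (α : ι → ℝ) (m : ℕ) (p : ι) :
    (((fun p => Circle.exp (α p)) ^ m) p : ℂ) = Complex.exp (Complex.I * m * α p) := by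
  rw [Pi.pow_apply, ← Circle.exp_natCast_mul, Circle.coe_exp]
  push_cast
  congr 1
  ring

theorem stmt_3_general (q : ℕ) (α : Fin q → ℝ) :
    ∃ n : ℕ → ℕ, StrictMono n ∧ ∀ p : Fin q,
      Tendsto (fun k => Complex.exp (Complex.I * (n k : ℂ) * (α p : ℂ)))
        atTop (𝓝 1) := by
  obtain ⟨n, hn, hlim⟩ := exists_strictMono_tendsto_pow_one fun p => Circle.exp (α p)
  refine ⟨n, hn, fun p => ?_⟩
  have hp : Tendsto (fun k => (((fun p => Circle.exp (α p)) ^ n k) p : ℂ)) atTop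
      (𝓝 ((1 : Fin q → Circle) p : ℂ)) :=
    (continuous_subtype_val.tendsto _).comp (tendsto_pi_nhds.1 hlim p)
  simpa only [Circle.coe_exp_pow_apply, Pi.one_apply, Circle.coe_one] using hp

theorem stmt_3 (q : ℕ) (α : Fin q → ℝ)
    (hα : ∀ p, α p ∈ Set.Ico (0 : ℝ) (2 * π)) :
    ∃ n : ℕ → ℕ, StrictMono n ∧ ∀ p : Fin q,
      Tendsto (fun k => Complex.exp (Complex.I * (n k : ℂ) * (α p : ℂ)))
        atTop (𝓝 1) :=
  stmt_3_general q α
end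

section
/- For every strictly increasing sequence (n(k)) of natural numbers there exists α ∈ [0, 2π) such that the sequence (exp(i · n(k) · α))_k does not converge to 1. -/
/-!
If `exp (i n_k α) → 1` for every `α ∈ [0, 2π)`, then also at `α = 2π`, so by bounded convergence
`∫₀^{2π} exp (i n_k α) dα → 2π`. But that integral vanishes as soon as `n_k ≠ 0`, which holds for
all `k ≥ 1` since `n` is strictly increasing.
-/

open Filter Topology Real

theorem intervalIntegral.tendsto_integral_of_tendsto_of_norm_le {E : Type*}
    [NormedAddCommGroup E] [NormedSpace ℝ E] {a b C : ℝ} {f : ℕ → ℝ → E} {g : ℝ → E}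
    (hf : ∀ k, Continuous (f k)) (hle : ∀ k x, ‖f k x‖ ≤ C)
    (hlim : ∀ x ∈ Set.uIoc a b, Tendsto (fun k => f k x) atTop (𝓝 (g x))) :
    Tendsto (fun k => ∫ x in a..b, f k x) atTop (𝓝 (∫ x in a..b, g x)) :=
  tendsto_integral_filter_of_dominated_convergence (fun _ => C)
    (.of_forall fun k => (hf k).aestronglyMeasurable)
    (.of_forall fun k => .of_forall fun x _ => hle k x) intervalIntegrable_const
    (.of_forall hlim)

theorem Complex.exp_I_mul_int_mul_two_pi (m : ℤ) : exp (I * m * (2 * π : ℝ)) = 1 := by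
  rw [← exp_int_mul_two_pi_mul_I m]
  push_cast
  ring_nf

theorem Complex.integral_exp_I_mul_int_mul {m : ℤ} (hm : m ≠ 0) :
    ∫ α in (0 : ℝ)..2 * π, exp (I * m * α) = 0 := by
  rw [integral_exp_mul_complex (mul_ne_zero I_ne_zero (Int.cast_ne_zero.mpr hm)),
    exp_I_mul_int_mul_two_pi]
  simp

theorem stmt_4 (n : ℕ → ℕ) (hn : StrictMono n) :
    ∃ α ∈ Set.Ico (0 : ℝ) (2 * π),
      ¬ Tendsto (fun k => Complex.exp (Complex.I * (n k : ℂ) * (α : ℂ)))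
        atTop (𝓝 1) := by
  by_contra! h
  set f : ℕ → ℝ → ℂ := fun k α => Complex.exp (Complex.I * ((n k : ℤ) : ℂ) * α) with hf
  have hlim : ∀ α ∈ Set.uIoc 0 (2 * π), Tendsto (fun k => f k α) atTop (𝓝 1) := by
    rw [Set.uIoc_of_le two_pi_pos.le]
    rintro α ⟨hα₀, hα⟩
    rcases hα.lt_or_eq with hα | rfl
    · simpa [hf] using h α ⟨hα₀.le, hα⟩
    · exact tendsto_const_nhds.congr fun k => (Complex.exp_I_mul_int_mul_two_pi (n k)).symm
  have hto_two_pi : Tendsto (fun k => ∫ α in (0 : ℝ)..2 * π, f k α) atTop (𝓝 (2 * π : ℝ)) := by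
    simpa using intervalIntegral.tendsto_integral_of_tendsto_of_norm_le (C := 1)
      (fun k => by fun_prop) (fun k α => by simp [hf, Complex.norm_exp]) hlim
  have hzero : ∀ᶠ k in atTop, ∫ α in (0 : ℝ)..2 * π, f k α = 0 := by
    filter_upwards [eventually_ge_atTop 1] with k hk
    exact Complex.integral_exp_I_mul_int_mul (by have := hn.lt_iff_lt.mpr hk; omega)
  have hlimits := tendsto_nhds_unique (tendsto_const_nhds.congr' (hzero.mono fun _ h => h.symm)) hto_two_pi
  exact two_pi_pos.ne' (by exact_mod_cast hlimits.symm)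
end

section
/- There exists a sequence (α_n)_{n≥1} of positive reals and a constant L > 0 such that: (a) α_{n+1} ≤ L · α_n for all n ≥ 1; (b) the sequence (α_n) is unbounded; (c) there exists a strictly increasing sequence (m_k) of natural numbers such that sup_{k,n} α_{n+m_k}/α_n < ∞. In particular, for every summable sequence λ ∈ ℓ¹, liminf_{m→∞} Σ_{n≥1} |λ_n| · α_{n+m}/α_n < ∞. -/
open Filter Topology

/-!
Take `α n = 2 ^ s(n)`, where `s(n)` is the binary digit sum of `n`. Legendre's formula
`(p - 1) v_p(n!) = n - s_p(n)` together with `m! n! ∣ (m + n)!` makes the digit sum subadditive,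
so `α (m + n) ≤ α m * α n`. Since `s(2 ^ k) = 1`, shifting by `m_k = 2 ^ k` (in particular by `1`)
at most doubles `α`, while `s(2 ^ k - 1) = k` makes `α` unbounded. The bound on the shifted
ratios then bounds the weighted `ℓ¹` sums along the subsequence `m_k`.
-/

namespace Nat

open scoped Nat

theorem digits_sum_add_le (p : ℕ) [Fact p.Prime] (m n : ℕ) :
    (p.digits (m + n)).sum ≤ (p.digits m).sum + (p.digits n).sum := by
  have hdvd : p ^ padicValNat p (m ! * n !) ∣ (m + n)! :=
    pow_padicValNat_dvd.trans (factorial_mul_factorial_dvd_factorial_add m n)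
  have hval := (padicValNat_dvd_iff_le (factorial_ne_zero _)).1 hdvd
  rw [padicValNat.mul (factorial_ne_zero m) (factorial_ne_zero n)] at hval
  have legendre := Nat.mul_le_mul_left (p - 1) hval
  rw [Nat.mul_add, sub_one_mul_padicValNat_factorial, sub_one_mul_padicValNat_factorial,
    sub_one_mul_padicValNat_factorial] at legendre
  have := digit_sum_le p m
  have := digit_sum_le p n
  have := digit_sum_le p (m + n)
  omega

theorem digits_sum_base_pow {b : ℕ} (hb : 1 < b) (k : ℕ) : (b.digits (b ^ k)).sum = 1 := by
  simpa [digits_of_lt b 1 one_ne_zero hb] using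
    congrArg List.sum (digits_base_pow_mul hb one_pos (k := k))

theorem exists_digits_sum_eq {b : ℕ} (hb : 1 < b) (k : ℕ) : ∃ n, (b.digits n).sum = k :=
  ⟨ofDigits b (List.replicate k 1), by
    simpa using sum_digits_ofDigits_eq_sum hb (l := k) (L := List.replicate k 1)
      ⟨List.length_replicate, fun x hx => (List.eq_of_mem_replicate hx).symm ▸ hb⟩⟩

end Nat

noncomputable def binaryWeight (n : ℕ) : ℝ := 2 ^ (Nat.digits 2 n).sum

theorem binaryWeight_pos (n : ℕ) : 0 < binaryWeight n := by
  unfold binaryWeight; positivity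

theorem binaryWeight_add_le (m n : ℕ) :
    binaryWeight (m + n) ≤ binaryWeight m * binaryWeight n := by
  unfold binaryWeight
  rw [← pow_add]
  exact pow_le_pow_right₀ one_le_two (Nat.digits_sum_add_le 2 m n)

theorem binaryWeight_two_pow (k : ℕ) : binaryWeight (2 ^ k) = 2 := by
  rw [binaryWeight, Nat.digits_sum_base_pow one_lt_two, pow_one]

theorem binaryWeight_add_two_pow_le (k n : ℕ) :
    binaryWeight (n + 2 ^ k) ≤ 2 * binaryWeight n := by
  simpa only [binaryWeight_two_pow, mul_comm] using binaryWeight_add_le n (2 ^ k)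

theorem binaryWeight_add_two_pow_div_le (k n : ℕ) :
    binaryWeight (n + 2 ^ k) / binaryWeight n ≤ 2 :=
  (div_le_iff₀ (binaryWeight_pos n)).2 (binaryWeight_add_two_pow_le k n)

theorem exists_lt_binaryWeight (R : ℝ) : ∃ n, R < binaryWeight n := by
  obtain ⟨k, hk⟩ := pow_unbounded_of_one_lt R one_lt_two
  obtain ⟨n, hn⟩ := Nat.exists_digits_sum_eq one_lt_two k
  exact ⟨n, by rwa [binaryWeight, hn]⟩

theorem frequently_tsum_abs_mul_div_le {α : ℕ → ℝ} (hα : ∀ n, 0 < α n) {m : ℕ → ℕ}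
    (hm : StrictMono m) {B : ℝ} (hB : ∀ k n, α (n + m k) / α n ≤ B) {lam : ℕ → ℝ}
    (hlam : Summable fun n => |lam n|) :
    ∃ᶠ M in atTop, ∑' n, |lam n| * (α (n + M) / α n) ≤ B * ∑' n, |lam n| := by
  refine hm.tendsto_atTop.frequently (Frequently.of_forall fun k => ?_)
  have hle : ∀ n, |lam n| * (α (n + m k) / α n) ≤ B * |lam n| := fun n => by
    rw [mul_comm B]; exact mul_le_mul_of_nonneg_left (hB k n) (abs_nonneg _)
  have hnonneg : ∀ n, 0 ≤ |lam n| * (α (n + m k) / α n) := fun n =>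
    mul_nonneg (abs_nonneg _) (div_pos (hα _) (hα _)).le
  have hsum := hlam.mul_left B
  rw [← tsum_mul_left]
  exact (hsum.of_nonneg_of_le hnonneg hle).tsum_le_tsum hle hsum

theorem stmt_7 :
    ∃ (α : ℕ → ℝ) (L : ℝ), 0 < L ∧ (∀ n, 0 < α n) ∧
      (∀ n, 1 ≤ n → α (n + 1) ≤ L * α n) ∧
      (∀ R : ℝ, ∃ n, R < α n) ∧
      (∃ m : ℕ → ℕ, StrictMono m ∧ ∃ B : ℝ,
        ∀ k n, 1 ≤ n → α (n + m k) / α n ≤ B) ∧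
      (∀ lam : ℕ → ℝ, Summable (fun n => |lam n|) →
        ∃ C : ℝ, ∃ᶠ m in atTop, (∑' n : ℕ, |lam n| * (α (n + m) / α n)) ≤ C) := by
  have hm : StrictMono fun k => 2 ^ k := pow_right_strictMono₀ one_lt_two
  refine ⟨binaryWeight, 2, two_pos, binaryWeight_pos, fun n _ => ?_, exists_lt_binaryWeight,
    ⟨_, hm, 2, fun k n _ => binaryWeight_add_two_pow_div_le k n⟩, fun lam hlam =>
    ⟨_, frequently_tsum_abs_mul_div_le binaryWeight_pos hm binaryWeight_add_two_pow_div_le hlam⟩⟩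
  simpa using binaryWeight_add_two_pow_le 0 n
end

section
/- Let f : [a, ∞) → [a, ∞) (with a ≤ 0) be continuous, let 0 ≤ b < c, suppose f(b) = b, f(c) = c, f(y) > y for all y ∈ (b,c), and f maps (b,c) into (b,c). Then for every x ∈ (b,c), the sequence (f^n(x))_{n∈ℕ} converges to c. -/
/-! The orbit of `x` stays in `(b, c)` and increases, so it converges to some `L ∈ (b, c]`.
If `L < c`, continuity at `L` makes `L` a fixed point, which `y < f y` on `(b, c)` forbids;
hence `L = c`. -/

open Filter Topology Set

theorem monotone_iterate_of_mapsTo_of_le_map {α : Type*} [Preorder α] {f : α → α} {s : Set α}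
    (hmaps : MapsTo f s s) (hle : ∀ y ∈ s, y ≤ f y) {x : α} (hx : x ∈ s) :
    Monotone fun n => f^[n] x :=
  monotone_nat_of_le_succ fun n => by
    rw [Function.iterate_succ_apply']
    exact hle _ (hmaps.iterate n hx)

theorem tendsto_iterate_of_mapsTo_Ioo_of_lt_map {α : Type*} [ConditionallyCompleteLinearOrder α]
    [TopologicalSpace α] [OrderTopology α] {f : α → α} {b c : α}
    (hcont : ContinuousOn f (Ioo b c)) (hmaps : MapsTo f (Ioo b c) (Ioo b c))
    (hlt : ∀ y ∈ Ioo b c, y < f y) {x : α} (hx : x ∈ Ioo b c) :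
    Tendsto (fun n => f^[n] x) atTop (𝓝 c) := by
  have hmem : ∀ n, f^[n] x ∈ Ioo b c := fun n => hmaps.iterate n hx
  have hbdd : BddAbove (range fun n => f^[n] x) := ⟨c, forall_mem_range.2 fun n => (hmem n).2.le⟩
  have hlim := tendsto_atTop_ciSup
    (monotone_iterate_of_mapsTo_of_le_map hmaps (fun y hy => (hlt y hy).le) hx) hbdd
  set L := ⨆ n, f^[n] x
  have hbL : b < L := hx.1.trans_le (le_ciSup hbdd 0)
  have hLc : L ≤ c := ciSup_le fun n => (hmem n).2.le
  obtain hLc | rfl := hLc.lt_or_eq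
  · have hfix : f L = L :=
      isFixedPt_of_tendsto_iterate hlim (hcont.continuousAt (Ioo_mem_nhds hbL hLc))
    exact absurd hfix (hlt L ⟨hbL, hLc⟩).ne'
  · exact hlim

theorem stmt_11_general (a : ℝ) (ha : a ≤ 0) (f : ℝ → ℝ)
    (hcont : ContinuousOn f (Ici a))
    (b c : ℝ) (hb : 0 ≤ b)
    (hU : ∀ y ∈ Ioo b c, y < f y) (hmaps' : MapsTo f (Ioo b c) (Ioo b c)) :
    ∀ x ∈ Ioo b c, Tendsto (fun n => f^[n] x) atTop (𝓝 c) := fun _ hx =>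
  tendsto_iterate_of_mapsTo_Ioo_of_lt_map
    (hcont.mono fun _ hy => (ha.trans hb).trans hy.1.le) hmaps' hU hx

theorem stmt_11 (a : ℝ) (ha : a ≤ 0) (f : ℝ → ℝ)
    (hmaps : MapsTo f (Ici a) (Ici a)) (hcont : ContinuousOn f (Ici a))
    (b c : ℝ) (hb : 0 ≤ b) (hbc : b < c) (hfb : f b = b) (hfc : f c = c)
    (hU : ∀ y ∈ Ioo b c, y < f y) (hmaps' : MapsTo f (Ioo b c) (Ioo b c)) :
    ∀ x ∈ Ioo b c, Tendsto (fun n => f^[n] x) atTop (𝓝 c) :=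
  stmt_11_general a ha f hcont b c hb hU hmaps'
end

section
/- Let f : ℝ → ℝ be continuous with f(0) = 0, and suppose there exists x ∈ ℝ whose orbit under f is unbounded. Then there exist y ∈ ℝ and k ≥ 1 such that either y > 0 and f^k(y) > y, or y < 0 and f^k(y) < y. -/
/-! If no point `y > 0` is ever pushed above itself and no point `y < 0` ever below itself,
the orbit of `x > 0` stays below `x`. While it is in `[0, x]` its next step is at least a lower bound
`B` of `f` on that compact interval, and while it is negative it can only move up; so it
never leaves `[min 0 B, x]`. The case `x < 0` follows by conjugating `f` with
`y ↦ -y`. -/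

lemma iterate_neg_conj (f : ℝ → ℝ) (n : ℕ) (x : ℝ) :
    (fun y => -f (-y))^[n] x = -f^[n] (-x) := by
  induction n generalizing x with
  | zero => simp
  | succ n ih => simp [Function.iterate_succ_apply, ih]

lemma exists_abs_iterate_le_of_pos {f : ℝ → ℝ} {x : ℝ} (hf : ContinuousOn f (Set.Icc 0 x))
    (hx : 0 < x) (hpos : ∀ y > 0, ∀ k ≥ 1, f^[k] y ≤ y) (hneg : ∀ y < 0, y ≤ f y) :
    ∃ C, ∀ n, |f^[n] x| ≤ C := by
  have hle : ∀ n, f^[n] x ≤ x := fun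
    | 0 => le_rfl
    | n + 1 => hpos x hx (n + 1) n.succ_pos
  obtain ⟨B, hB⟩ := isCompact_Icc.bddBelow_image hf
  have hge : ∀ n, min 0 B ≤ f^[n] x := by
    intro n
    induction n with
    | zero => exact (min_le_left _ _).trans hx.le
    | succ n ih =>
      rw [Function.iterate_succ_apply']
      rcases le_or_gt 0 (f^[n] x) with hn | hn
      · exact (min_le_right _ _).trans (hB ⟨_, ⟨hn, hle n⟩, rfl⟩)
      · exact ih.trans (hneg _ hn)
  exact ⟨max (-min 0 B) x, fun n => abs_le.2
    ⟨by linarith [hge n, le_max_left (-min 0 B) x], (hle n).trans (le_max_right _ _)⟩⟩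

theorem stmt_13 (f : ℝ → ℝ) (hf : Continuous f) (hf0 : f 0 = 0)
    (hx : ∃ x : ℝ, ¬ ∃ C : ℝ, ∀ n : ℕ, |f^[n] x| ≤ C) :
    ∃ (y : ℝ) (k : ℕ), 1 ≤ k ∧
      ((0 < y ∧ y < f^[k] y) ∨ (y < 0 ∧ f^[k] y < y)) := by
  by_contra! hcon
  have hpos : ∀ y > 0, ∀ k ≥ 1, f^[k] y ≤ y := fun y hy k hk => (hcon y k hk).1 hy
  have hneg : ∀ y < 0, ∀ k ≥ 1, y ≤ f^[k] y := fun y hy k hk => (hcon y k hk).2 hy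
  obtain ⟨x, hx⟩ := hx
  apply hx
  rcases lt_trichotomy x 0 with hx0 | rfl | hx0
  · obtain ⟨C, hC⟩ := exists_abs_iterate_le_of_pos (f := fun y => -f (-y)) (x := -x)
      (by fun_prop) (neg_pos.2 hx0)
      (fun y hy k hk => by
        rw [iterate_neg_conj]
        linarith [hneg (-y) (neg_neg_of_pos hy) k hk])
      (fun y hy => by
        have := hpos (-y) (neg_pos.2 hy) 1 le_rfl
        rw [Function.iterate_one] at this
        linarith)
    exact ⟨C, fun n => by simpa [iterate_neg_conj] using hC n⟩
  · exact ⟨0, fun n => by simp [Function.iterate_fixed hf0]⟩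
  · exact exists_abs_iterate_le_of_pos hf.continuousOn hx0 hpos
      (fun y hy => by simpa using hneg y hy 1 le_rfl)
end

section
/- Let (m(k))_{k≥1} be a strictly increasing sequence of positive integers such that 2·m(k) divides m(k+1) and m(k) · Σ_{j>k} 1/m(j) < 2^{-k} for all k ≥ 1. Define α = 2π Σ_{j=1}^∞ (3 + (−1)^j)/(4 m(j)). Then the sequence (exp(i · m(k) · α))_k has both 1 and −1 as accumulation points; in particular it does not converge. -/
/-!
Write `α = 2π ∑ⱼ cⱼ / m(j)` with `cⱼ = (3 + (-1)ʲ) / 4 ∈ {1/2, 1}`. Since `2 m(j) ∣ m(k)` for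
`j < k`, each `m(k) cⱼ / m(j)` with `j < k` is an integer, so `m(k) α / 2π` is an integer plus
`c_k` plus the tail `ε_k = m(k) ∑_{j > k} cⱼ / m(j) ∈ [0, 2⁻ᵏ)`. As `exp (2πi c_k) = (-1)ᵏ`, this
gives `(-1)ᵏ exp (i m(k) α) = exp (2πi ε_k) → 1`: the even terms tend to `1`, the odd ones to `-1`.
-/

open Filter Topology Real

lemma tsum_ite_lt_eq_tsum_add {M : Type*} [AddCommMonoid M] [TopologicalSpace M] (g : ℕ → M)
    (k : ℕ) : ∑' j, (if k < j then g j else 0) = ∑' i, g (i + (k + 1)) := by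
  rw [← (add_left_injective (k + 1)).tsum_eq]
  · exact tsum_congr fun i => if_pos (by omega)
  · intro j hj
    have hkj : k < j := by by_contra h; exact hj (if_neg h)
    exact ⟨j - (k + 1), by simp only; omega⟩

lemma neg_one_pow_mem_Icc (j : ℕ) : (-1 : ℝ) ^ j ∈ Set.Icc (-1) 1 :=
  abs_le.mp (abs_neg_one_pow j).le

lemma subseq_tendsto_one_and_neg_one_of_tendsto_neg_one_pow_mul {u : ℕ → ℂ}
    (hu : Tendsto (fun k => (-1) ^ k * u k) atTop (𝓝 1)) :
    (∃ φ : ℕ → ℕ, StrictMono φ ∧ (∀ k, 1 ≤ φ k) ∧ Tendsto (u ∘ φ) atTop (𝓝 1)) ∧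
    (∃ ψ : ℕ → ℕ, StrictMono ψ ∧ (∀ k, 1 ≤ ψ k) ∧ Tendsto (u ∘ ψ) atTop (𝓝 (-1))) ∧
    ¬ ∃ L : ℂ, Tendsto u atTop (𝓝 L) := by
  have hφ : StrictMono fun k : ℕ => 2 * k + 2 := fun a b h => by dsimp only; omega
  have hψ : StrictMono fun k : ℕ => 2 * k + 1 := fun a b h => by dsimp only; omega
  have heven : Tendsto (fun k => u (2 * k + 2)) atTop (𝓝 1) :=
    (hu.comp hφ.tendsto_atTop).congr fun k => by simp [pow_succ, pow_mul]
  have hodd : Tendsto (fun k => u (2 * k + 1)) atTop (𝓝 (-1)) :=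
    (hu.comp hψ.tendsto_atTop).neg.congr fun k => by simp [pow_succ, pow_mul]
  refine ⟨⟨_, hφ, fun k => by omega, heven⟩, ⟨_, hψ, fun k => by omega, hodd⟩, ?_⟩
  rintro ⟨L, hL⟩
  have hL1 := tendsto_nhds_unique (hL.comp hφ.tendsto_atTop) heven
  have hL2 := tendsto_nhds_unique (hL.comp hψ.tendsto_atTop) hodd
  norm_num [hL1] at hL2

lemma two_pow_succ_le_two_mul {m : ℕ → ℕ} (hpos : ∀ k, 1 ≤ k → 0 < m k)
    (hdvd : ∀ k, 1 ≤ k → 2 * m k ∣ m (k + 1)) (j : ℕ) : 2 ^ (j + 1) ≤ 2 * m (j + 1) := by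
  induction j with
  | zero => simp only [zero_add, pow_one]; have := hpos 1 le_rfl; omega
  | succ j ih =>
    have := Nat.le_of_dvd (hpos (j + 2) (by omega)) (hdvd (j + 1) (by omega))
    rw [pow_succ]
    linarith

lemma two_mul_dvd_of_lt {m : ℕ → ℕ} (hdvd : ∀ k, 1 ≤ k → 2 * m k ∣ m (k + 1)) {j k : ℕ}
    (hj : 1 ≤ j) (hjk : j < k) : 2 * m j ∣ m k := by
  induction k, hjk using Nat.le_induction with
  | base => exact hdvd j hj
  | succ k hk ih => exact ih.trans ((dvd_mul_left _ _).trans (hdvd k (by omega)))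

lemma summable_one_div_cast {m : ℕ → ℕ} (hpos : ∀ k, 1 ≤ k → 0 < m k)
    (hdvd : ∀ k, 1 ≤ k → 2 * m k ∣ m (k + 1)) : Summable fun j => 1 / (m j : ℝ) := by
  refine (summable_nat_add_iff 1).mp (summable_geometric_two.of_nonneg_of_le
    (fun j => by positivity) fun j => ?_)
  have hm : (0 : ℝ) < m (j + 1) := by exact_mod_cast hpos (j + 1) (by omega)
  have hgrow : (2 : ℝ) ^ (j + 1) ≤ 2 * m (j + 1) := by
    exact_mod_cast two_pow_succ_le_two_mul hpos hdvd j
  calc 1 / (m (j + 1) : ℝ) ≤ 1 / 2 ^ j :=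
        one_div_le_one_div_of_le (by positivity) (by rw [pow_succ] at hgrow; linarith)
    _ = (1 / 2) ^ j := (one_div_pow 2 j).symm

noncomputable def lacunaryTerm (m : ℕ → ℕ) (j : ℕ) : ℝ :=
  if 1 ≤ j then (3 + (-1 : ℝ) ^ j) / (4 * (m j : ℝ)) else 0

lemma lacunaryTerm_nonneg (m : ℕ → ℕ) (j : ℕ) : 0 ≤ lacunaryTerm m j := by
  unfold lacunaryTerm
  split_ifs
  · have := (neg_one_pow_mem_Icc j).1
    exact div_nonneg (by linarith) (by positivity)
  · exact le_rfl

lemma lacunaryTerm_le (m : ℕ → ℕ) (j : ℕ) : lacunaryTerm m j ≤ 1 / (m j : ℝ) := by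
  unfold lacunaryTerm
  split_ifs
  · calc (3 + (-1 : ℝ) ^ j) / (4 * m j) ≤ 4 / (4 * m j) := by
          gcongr; linarith [(neg_one_pow_mem_Icc j).2]
      _ = 1 / m j := by rw [← mul_div_mul_left 1 (m j : ℝ) four_ne_zero, mul_one]
  · positivity

lemma summable_lacunaryTerm {m : ℕ → ℕ} (hpos : ∀ k, 1 ≤ k → 0 < m k)
    (hdvd : ∀ k, 1 ≤ k → 2 * m k ∣ m (k + 1)) : Summable (lacunaryTerm m) :=
  (summable_one_div_cast hpos hdvd).of_nonneg_of_le (lacunaryTerm_nonneg m) (lacunaryTerm_le m)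

lemma exists_int_mul_lacunaryTerm_eq {m : ℕ → ℕ} {j n : ℕ} (hj : 1 ≤ j) (hm : 0 < m j)
    (hn : 2 * m j ∣ n) : ∃ N : ℤ, (n : ℝ) * lacunaryTerm m j = N := by
  obtain ⟨q, rfl⟩ := hn
  have hm' : (m j : ℝ) ≠ 0 := by positivity
  simp only [lacunaryTerm, if_pos hj]
  rcases Nat.even_or_odd j with he | ho
  · exact ⟨2 * q, by rw [he.neg_one_pow]; push_cast; field_simp; ring⟩
  · exact ⟨q, by rw [ho.neg_one_pow]; push_cast; field_simp; ring⟩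

lemma exists_int_mul_sum_lacunaryTerm_eq {m : ℕ → ℕ} (hpos : ∀ k, 1 ≤ k → 0 < m k)
    (hdvd : ∀ k, 1 ≤ k → 2 * m k ∣ m (k + 1)) (k : ℕ) :
    ∃ N : ℤ, (m k : ℝ) * ∑ j ∈ Finset.range k, lacunaryTerm m j = N := by
  rw [Finset.mul_sum]
  refine Finset.sum_induction _ (fun x : ℝ => ∃ N : ℤ, x = N) ?_ ⟨0, by simp⟩ fun j hj => ?_
  · rintro _ _ ⟨a, rfl⟩ ⟨b, rfl⟩
    exact ⟨a + b, by push_cast; ring⟩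
  rcases Nat.eq_zero_or_pos j with rfl | hj0
  · exact ⟨0, by simp [lacunaryTerm]⟩
  · exact exists_int_mul_lacunaryTerm_eq hj0 (hpos j hj0)
      (two_mul_dvd_of_lt hdvd hj0 (Finset.mem_range.mp hj))

noncomputable def lacunaryTail (m : ℕ → ℕ) (k : ℕ) : ℝ :=
  m k * ∑' i, lacunaryTerm m (i + (k + 1))

lemma exists_int_mul_tsum_lacunaryTerm_eq {m : ℕ → ℕ} (hpos : ∀ k, 1 ≤ k → 0 < m k)
    (hdvd : ∀ k, 1 ≤ k → 2 * m k ∣ m (k + 1)) {k : ℕ} (hk : 1 ≤ k) :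
    ∃ N : ℤ, (m k : ℝ) * ∑' j, lacunaryTerm m j = N + (3 + (-1) ^ k) / 4 + lacunaryTail m k := by
  obtain ⟨N, hN⟩ := exists_int_mul_sum_lacunaryTerm_eq hpos hdvd k
  have hm : (m k : ℝ) ≠ 0 := by have := hpos k hk; positivity
  have hterm : (m k : ℝ) * lacunaryTerm m k = (3 + (-1) ^ k) / 4 := by
    simp only [lacunaryTerm, if_pos hk]
    field_simp
  refine ⟨N, ?_⟩
  rw [← (summable_lacunaryTerm hpos hdvd).sum_add_tsum_nat_add (k + 1), Finset.sum_range_succ,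
    lacunaryTail]
  linear_combination hN + hterm

lemma exp_two_pi_mul_I_mul_phase (k : ℕ) :
    Complex.exp (2 * π * Complex.I * (((3 + (-1) ^ k) / 4 : ℝ) : ℂ)) = (-1) ^ k := by
  rcases Nat.even_or_odd k with he | ho
  · rw [he.neg_one_pow, he.neg_one_pow]
    convert Complex.exp_two_pi_mul_I using 2
    push_cast; ring
  · rw [ho.neg_one_pow, ho.neg_one_pow]
    convert Complex.exp_pi_mul_I using 2
    push_cast; ring

lemma neg_one_pow_mul_exp_eq {m : ℕ → ℕ} (hpos : ∀ k, 1 ≤ k → 0 < m k)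
    (hdvd : ∀ k, 1 ≤ k → 2 * m k ∣ m (k + 1)) {α : ℝ}
    (hα : α = 2 * π * ∑' j, lacunaryTerm m j) {k : ℕ} (hk : 1 ≤ k) :
    (-1) ^ k * Complex.exp (Complex.I * m k * α) =
      Complex.exp (2 * π * Complex.I * lacunaryTail m k) := by
  obtain ⟨N, hN⟩ := exists_int_mul_tsum_lacunaryTerm_eq hpos hdvd hk
  have harg : Complex.I * m k * α = N * (2 * π * Complex.I) +
      2 * π * Complex.I * (((3 + (-1) ^ k) / 4 : ℝ) : ℂ) +
      2 * π * Complex.I * lacunaryTail m k := by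
    have := congrArg (fun x : ℝ => (x : ℂ)) hN
    push_cast at this
    rw [hα]
    push_cast
    linear_combination (2 * π * Complex.I) * this
  rw [harg, Complex.exp_add, Complex.exp_add, Complex.exp_int_mul_two_pi_mul_I, one_mul,
    exp_two_pi_mul_I_mul_phase, ← mul_assoc, ← pow_add, ← two_mul, pow_mul]
  norm_num

lemma tendsto_lacunaryTail {m : ℕ → ℕ} (hpos : ∀ k, 1 ≤ k → 0 < m k)
    (hdvd : ∀ k, 1 ≤ k → 2 * m k ∣ m (k + 1))
    (hsum : ∀ k, 1 ≤ k →
      (m k : ℝ) * (∑' j : ℕ, if k < j then 1 / (m j : ℝ) else 0) < 2 ^ (-(k : ℤ))) :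
    Tendsto (lacunaryTail m) atTop (𝓝 0) := by
  have hnonneg (k : ℕ) : 0 ≤ lacunaryTail m k :=
    mul_nonneg (Nat.cast_nonneg _) (tsum_nonneg fun i => lacunaryTerm_nonneg m _)
  have hle (k : ℕ) (hk : 1 ≤ k) : lacunaryTail m k ≤ (1 / 2) ^ k := by
    have htail := hsum k hk
    rw [tsum_ite_lt_eq_tsum_add, zpow_neg, zpow_natCast, ← inv_pow, ← one_div] at htail
    refine le_trans (mul_le_mul_of_nonneg_left ?_ (Nat.cast_nonneg _)) htail.le
    exact ((summable_nat_add_iff (k + 1)).mpr (summable_lacunaryTerm hpos hdvd)).tsum_le_tsum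
      (fun i => lacunaryTerm_le m _)
      ((summable_nat_add_iff (k + 1)).mpr (summable_one_div_cast hpos hdvd))
  exact squeeze_zero' (.of_forall hnonneg) (eventually_atTop.mpr ⟨1, hle⟩)
    (tendsto_pow_atTop_nhds_zero_of_lt_one (by norm_num) (by norm_num))

lemma tendsto_neg_one_pow_mul_exp {m : ℕ → ℕ} (hpos : ∀ k, 1 ≤ k → 0 < m k)
    (hdvd : ∀ k, 1 ≤ k → 2 * m k ∣ m (k + 1))
    (hsum : ∀ k, 1 ≤ k →
      (m k : ℝ) * (∑' j : ℕ, if k < j then 1 / (m j : ℝ) else 0) < 2 ^ (-(k : ℤ)))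
    {α : ℝ} (hα : α = 2 * π * ∑' j, lacunaryTerm m j) :
    Tendsto (fun k => (-1) ^ k * Complex.exp (Complex.I * m k * α)) atTop (𝓝 1) := by
  have hcont : Continuous fun x : ℝ => Complex.exp (2 * π * Complex.I * x) := by fun_prop
  have hexp : Tendsto (fun x : ℝ => Complex.exp (2 * π * Complex.I * x)) (𝓝 0) (𝓝 1) := by
    simpa using hcont.tendsto 0
  refine (hexp.comp (tendsto_lacunaryTail hpos hdvd hsum)).congr' ?_
  filter_upwards [eventually_ge_atTop 1] with k hk
  exact (neg_one_pow_mul_exp_eq hpos hdvd hα hk).symm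

theorem stmt_19_general (m : ℕ → ℕ)
    (hpos : ∀ k, 1 ≤ k → 0 < m k)
    (hdvd : ∀ k, 1 ≤ k → 2 * m k ∣ m (k + 1))
    (hsum : ∀ k, 1 ≤ k →
      (m k : ℝ) * (∑' j : ℕ, if k < j then 1 / (m j : ℝ) else 0) < 2 ^ (-(k : ℤ)))
    (α : ℝ)
    (hα : α = 2 * π * ∑' j : ℕ,
      if 1 ≤ j then (3 + (-1 : ℝ) ^ j) / (4 * (m j : ℝ)) else 0) :
    (∃ φ : ℕ → ℕ, StrictMono φ ∧ (∀ k, 1 ≤ φ k) ∧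
      Tendsto (fun k => Complex.exp (Complex.I * (m (φ k) : ℂ) * (α : ℂ)))
        atTop (𝓝 1)) ∧
    (∃ ψ : ℕ → ℕ, StrictMono ψ ∧ (∀ k, 1 ≤ ψ k) ∧
      Tendsto (fun k => Complex.exp (Complex.I * (m (ψ k) : ℂ) * (α : ℂ)))
        atTop (𝓝 (-1))) ∧
    ¬ ∃ L : ℂ, Tendsto (fun k => Complex.exp (Complex.I * (m k : ℂ) * (α : ℂ)))
        atTop (𝓝 L) :=
  subseq_tendsto_one_and_neg_one_of_tendsto_neg_one_pow_mul
    (tendsto_neg_one_pow_mul_exp hpos hdvd hsum hα)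

theorem stmt_19 (m : ℕ → ℕ)
    (hmono : ∀ k l : ℕ, 1 ≤ k → k < l → m k < m l)
    (hpos : ∀ k, 1 ≤ k → 0 < m k)
    (hdvd : ∀ k, 1 ≤ k → 2 * m k ∣ m (k + 1))
    (hsum : ∀ k, 1 ≤ k →
      (m k : ℝ) * (∑' j : ℕ, if k < j then 1 / (m j : ℝ) else 0) < 2 ^ (-(k : ℤ)))
    (α : ℝ)
    (hα : α = 2 * π * ∑' j : ℕ,
      if 1 ≤ j then (3 + (-1 : ℝ) ^ j) / (4 * (m j : ℝ)) else 0) :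
    (∃ φ : ℕ → ℕ, StrictMono φ ∧ (∀ k, 1 ≤ φ k) ∧
      Tendsto (fun k => Complex.exp (Complex.I * (m (φ k) : ℂ) * (α : ℂ)))
        atTop (𝓝 1)) ∧
    (∃ ψ : ℕ → ℕ, StrictMono ψ ∧ (∀ k, 1 ≤ ψ k) ∧
      Tendsto (fun k => Complex.exp (Complex.I * (m (ψ k) : ℂ) * (α : ℂ)))
        atTop (𝓝 (-1))) ∧
    ¬ ∃ L : ℂ, Tendsto (fun k => Complex.exp (Complex.I * (m k : ℂ) * (α : ℂ)))
        atTop (𝓝 L) :=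
  stmt_19_general m hpos hdvd hsum α hα
end
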